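/- Fix real numbers φ₀ < φ₁ and a < b, set Q := [φ₀,φ₁] × [a,b], and fix n, m ∈ ℕ. Then there exists a constant C > 0, depending only on n, m (and Q), such that for all smooth functions f, g : ℝ × ℝ → ℝ: ‖f‖_n · ‖g‖_m ≤ C·(‖f‖_{n+m}·‖g‖₀ + ‖f‖₀·‖g‖_{n+m}). -/

import Mathlib

open Set

/-- Partial derivative in the first variable `φ` of a function on `ℝ × ℝ`. -/
noncomputable def pdφ (u : ℝ × ℝ → ℝ) : ℝ × ℝ → ℝ :=
  fun p => deriv (fun x => u (x, p.2)) p.1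

/-- Partial derivative in the second variable `k` of a function on `ℝ × ℝ`. -/
noncomputable def pdk (u : ℝ × ℝ → ℝ) : ℝ × ℝ → ℝ :=
  fun p => deriv (fun y => u (p.1, y)) p.2

/-- `sup_{p ∈ Q} |u p|`, the uniform norm over `Q`. -/
noncomputable def supQ (Q : Set (ℝ × ℝ)) (u : ℝ × ℝ → ℝ) : ℝ :=
  ⨆ p : Q, |u ↑p|

/-- The graded seminorm `‖u‖_n = ∑_{j=0}^n ∑_{α₁+α₂=j} sup_Q |∂_φ^{α₁} ∂_k^{α₂} u|`. -/
noncomputable def gnorm (Q : Set (ℝ × ℝ)) (n : ℕ) (u : ℝ × ℝ → ℝ) : ℝ :=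
  ∑ j ∈ Finset.range (n + 1), ∑ i ∈ Finset.range (j + 1),
    supQ Q (pdφ^[i] (pdk^[j - i] u))

lemma pdφ_eq {u : ℝ × ℝ → ℝ} (hu : ContDiff ℝ (⊤:ℕ∞) u) (p : ℝ × ℝ) :
    pdφ u p = fderiv ℝ u p (1, 0) := by
  have h1 : HasDerivAt (fun x : ℝ => (x, p.2)) ((1 : ℝ), (0 : ℝ)) p.1 :=
    (hasDerivAt_id p.1).prodMk (hasDerivAt_const p.1 p.2)
  have h2 : HasFDerivAt u (fderiv ℝ u p) p :=
    (hu.differentiable (by simp) p).hasFDerivAt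
  have h3 : HasDerivAt (fun x : ℝ => u (x, p.2)) (fderiv ℝ u p (1, 0)) p.1 := by
    have := h2.comp_hasDerivAt p.1 (by simpa using h1)
    exact this
  exact h3.deriv

lemma pdk_eq {u : ℝ × ℝ → ℝ} (hu : ContDiff ℝ (⊤:ℕ∞) u) (p : ℝ × ℝ) :
    pdk u p = fderiv ℝ u p (0, 1) := by
  have h1 : HasDerivAt (fun y : ℝ => (p.1, y)) ((0 : ℝ), (1 : ℝ)) p.2 :=
    (hasDerivAt_const p.2 p.1).prodMk (hasDerivAt_id p.2)
  have h2 : HasFDerivAt u (fderiv ℝ u p) p :=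
    (hu.differentiable (by simp) p).hasFDerivAt
  have h3 : HasDerivAt (fun y : ℝ => u (p.1, y)) (fderiv ℝ u p (0, 1)) p.2 := by
    have := h2.comp_hasDerivAt p.2 (by simpa using h1)
    exact this
  exact h3.deriv

lemma pdφ_contDiff {u : ℝ × ℝ → ℝ} (hu : ContDiff ℝ (⊤:ℕ∞) u) : ContDiff ℝ (⊤:ℕ∞) (pdφ u) := by
  have h := (contDiff_infty_iff_fderiv.mp hu).2
  have h2 : ContDiff ℝ (⊤:ℕ∞) fun p : ℝ × ℝ => fderiv ℝ u p (1, 0) := h.clm_apply contDiff_const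
  have he : pdφ u = fun p : ℝ × ℝ => fderiv ℝ u p (1, 0) := funext fun p => pdφ_eq hu p
  rw [he]; exact h2

lemma pdk_contDiff {u : ℝ × ℝ → ℝ} (hu : ContDiff ℝ (⊤:ℕ∞) u) : ContDiff ℝ (⊤:ℕ∞) (pdk u) := by
  have h := (contDiff_infty_iff_fderiv.mp hu).2
  have h2 : ContDiff ℝ (⊤:ℕ∞) fun p : ℝ × ℝ => fderiv ℝ u p (0, 1) := h.clm_apply contDiff_const
  have he : pdk u = fun p : ℝ × ℝ => fderiv ℝ u p (0, 1) := funext fun p => pdk_eq hu p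
  rw [he]; exact h2

lemma iter_contDiff {u : ℝ × ℝ → ℝ} (hu : ContDiff ℝ (⊤:ℕ∞) u) (i j : ℕ) :
    ContDiff ℝ (⊤:ℕ∞) (pdφ^[i] (pdk^[j] u)) := by
  have hk : ContDiff ℝ (⊤:ℕ∞) (pdk^[j] u) := by
    induction j with
    | zero => exact hu
    | succ j ih => rw [Function.iterate_succ_apply']; exact pdk_contDiff ih
  induction i with
  | zero => exact hk
  | succ i ih => rw [Function.iterate_succ_apply']; exact pdφ_contDiff ih

section supQ
variable {Q : Set (ℝ × ℝ)} {u : ℝ × ℝ → ℝ}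

lemma supQ_nonneg : 0 ≤ supQ Q u := Real.iSup_nonneg fun p => abs_nonneg _

lemma supQ_le (hne : Q.Nonempty) {M : ℝ} (h : ∀ p ∈ Q, |u p| ≤ M) : supQ Q u ≤ M := by
  have : Nonempty Q := hne.to_subtype
  exact ciSup_le fun p => h p p.2

lemma le_supQ (hQ : IsCompact Q) (hu : Continuous u) {p : ℝ × ℝ} (hp : p ∈ Q) :
    |u p| ≤ supQ Q u := by
  have hb : BddAbove (Set.range fun q : Q => |u ↑q|) := by
    have h := hQ.bddAbove_image (f := fun q => |u q|) (hu.abs.continuousOn)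
    have : (Set.range fun q : Q => |u ↑q|) = (fun q => |u q|) '' Q := by
      ext x; simp [Set.image_eq_range]
    rwa [this]
  exact le_ciSup hb ⟨p, hp⟩

lemma gnorm_nonneg (Q : Set (ℝ × ℝ)) (n : ℕ) (u : ℝ × ℝ → ℝ) : 0 ≤ gnorm Q n u :=
  Finset.sum_nonneg fun _ _ => Finset.sum_nonneg fun _ _ => supQ_nonneg

lemma gnorm_mono (Q : Set (ℝ × ℝ)) (u : ℝ × ℝ → ℝ) {n n' : ℕ} (h : n ≤ n') :
    gnorm Q n u ≤ gnorm Q n' u := by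
  apply Finset.sum_le_sum_of_subset_of_nonneg
  · exact Finset.range_subset_range.2 (by omega)
  · intro j _ _; exact Finset.sum_nonneg fun _ _ => supQ_nonneg

lemma term_le_gnorm (Q : Set (ℝ × ℝ)) (u : ℝ × ℝ → ℝ) (i j : ℕ) :
    supQ Q (pdφ^[i] (pdk^[j] u)) ≤ gnorm Q (i + j) u := by
  have h1 : supQ Q (pdφ^[i] (pdk^[j] u)) ≤
      ∑ i' ∈ Finset.range (i + j + 1), supQ Q (pdφ^[i'] (pdk^[i + j - i'] u)) := by
    have := Finset.single_le_sum
      (f := fun i' => supQ Q (pdφ^[i'] (pdk^[i + j - i'] u)))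
      (s := Finset.range (i + j + 1)) (fun _ _ => supQ_nonneg)
      (a := i) (by simp)
    simpa [Nat.add_sub_cancel_left] using this
  refine h1.trans ?_
  exact Finset.single_le_sum
    (f := fun j' => ∑ i' ∈ Finset.range (j' + 1), supQ Q (pdφ^[i'] (pdk^[j' - i'] u)))
    (s := Finset.range (i + j + 1))
    (fun _ _ => Finset.sum_nonneg fun _ _ => supQ_nonneg) (a := i + j) (by simp)

lemma gnorm_succ (Q : Set (ℝ × ℝ)) (u : ℝ × ℝ → ℝ) (k : ℕ) :
    gnorm Q (k + 1) u = gnorm Q k u +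
      ∑ i ∈ Finset.range (k + 2), supQ Q (pdφ^[i] (pdk^[k + 1 - i] u)) := by
  rw [gnorm, Finset.sum_range_succ]; rfl

end supQ

section landau

lemma landau_core {v : ℝ → ℝ} {c d B0 B2 : ℝ} (hcd : c < d)
    (hv : ContDiff ℝ (⊤:ℕ∞) v)
    (hB0 : ∀ x ∈ Icc c d, |v x| ≤ B0)
    (hB2 : ∀ x ∈ Icc c d, |deriv (deriv v) x| ≤ B2)
    {t : ℝ} (ht : 0 < t) (ht2 : t ≤ (d - c) / 2) :
    ∀ x ∈ Icc c d, |deriv v x| ≤ 2 * B0 / t + B2 * t := by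
  have hdv : Differentiable ℝ v := hv.differentiable (by simp)
  have hv1 : ContDiff ℝ (⊤:ℕ∞) (deriv v) := (contDiff_infty_iff_deriv.mp hv).2
  have hdv1 : Differentiable ℝ (deriv v) := hv1.differentiable (by simp)
  intro x hx
  rcases le_or_gt x ((c + d) / 2) with hhalf | hhalf
  · -- use y = x + t > x
    set y := x + t with hy
    have hxy : x < y := by simp [hy]; linarith
    have hyd : y ≤ d := by
      have := hx.1; simp only [hy]
      have : x ≤ (c + d) / 2 := hhalf
      linarith
    have hsub : Icc x y ⊆ Icc c d := Icc_subset_Icc hx.1 hyd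
    obtain ⟨ξ, hξ, hs1⟩ := exists_hasDerivAt_eq_slope v (deriv v) hxy
      hdv.continuous.continuousOn (fun z _ => (hdv z).hasDerivAt)
    obtain ⟨η, hη, hs2⟩ := exists_hasDerivAt_eq_slope (deriv v) (deriv (deriv v)) hξ.1
      hdv1.continuous.continuousOn (fun z _ => (hdv1 z).hasDerivAt)
    have hξm : ξ ∈ Icc c d := hsub ⟨le_of_lt hξ.1, le_of_lt hξ.2⟩
    have hηm : η ∈ Icc c d := hsub ⟨le_of_lt hη.1, le_of_lt (hη.2.trans hξ.2)⟩
    have hym : y ∈ Icc c d := ⟨le_trans hx.1 (le_of_lt hxy), hyd⟩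
    have hne : ξ - x ≠ 0 := by have := hξ.1; intro h; linarith [sub_eq_zero.mp h]
    have hkey : deriv v x = deriv v ξ - deriv (deriv v) η * (ξ - x) := by
      field_simp at hs2; linarith [hs2]
    have h1 : |deriv v ξ| ≤ 2 * B0 / t := by
      rw [hs1]
      have : y - x = t := by simp [hy]
      rw [this, abs_div, abs_of_pos ht]
      rw [div_le_div_iff₀ (by positivity) ht]
      have := abs_sub (v y) (v x)
      calc |v y - v x| * t ≤ (|v y| + |v x|) * t := by
            apply mul_le_mul_of_nonneg_right (abs_sub _ _) ht.le
        _ ≤ (B0 + B0) * t := by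
            apply mul_le_mul_of_nonneg_right _ ht.le
            exact add_le_add (hB0 y hym) (hB0 x hx)
        _ = 2 * B0 * t := by ring
    have h2 : |deriv (deriv v) η * (ξ - x)| ≤ B2 * t := by
      rw [abs_mul]
      apply mul_le_mul (hB2 η hηm) _ (abs_nonneg _)
        ((abs_nonneg _).trans (hB2 η hηm))
      rw [abs_of_pos (by linarith [hξ.1] : (0:ℝ) < ξ - x)]
      have := hξ.2; simp only [hy] at this; linarith
    calc |deriv v x| ≤ |deriv v ξ| + |deriv (deriv v) η * (ξ - x)| := by
          rw [hkey]; exact abs_sub _ _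
      _ ≤ 2 * B0 / t + B2 * t := add_le_add h1 h2
  · -- use y = x - t < x
    set y := x - t with hy
    have hxy : y < x := by simp [hy]; linarith
    have hyc : c ≤ y := by
      have := hx.2; simp only [hy]; linarith
    have hsub : Icc y x ⊆ Icc c d := Icc_subset_Icc hyc hx.2
    obtain ⟨ξ, hξ, hs1⟩ := exists_hasDerivAt_eq_slope v (deriv v) hxy
      hdv.continuous.continuousOn (fun z _ => (hdv z).hasDerivAt)
    obtain ⟨η, hη, hs2⟩ := exists_hasDerivAt_eq_slope (deriv v) (deriv (deriv v)) hξ.2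
      hdv1.continuous.continuousOn (fun z _ => (hdv1 z).hasDerivAt)
    have hξm : ξ ∈ Icc c d := hsub ⟨le_of_lt hξ.1, le_of_lt hξ.2⟩
    have hηm : η ∈ Icc c d := hsub ⟨le_of_lt (hξ.1.trans hη.1), le_of_lt hη.2⟩
    have hym : y ∈ Icc c d := ⟨hyc, le_trans (le_of_lt hxy) hx.2⟩
    have hkey : deriv v x = deriv v ξ + deriv (deriv v) η * (x - ξ) := by
      have hne : x - ξ ≠ 0 := by have := hξ.2; intro h; linarith [sub_eq_zero.mp h]
      field_simp at hs2; linarith [hs2]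
    have h1 : |deriv v ξ| ≤ 2 * B0 / t := by
      rw [hs1]
      have : x - y = t := by simp [hy]
      rw [this, abs_div, abs_of_pos ht]
      rw [div_le_div_iff₀ (by positivity) ht]
      calc |v x - v y| * t ≤ (|v x| + |v y|) * t := by
            apply mul_le_mul_of_nonneg_right (abs_sub _ _) ht.le
        _ ≤ (B0 + B0) * t := by
            apply mul_le_mul_of_nonneg_right _ ht.le
            exact add_le_add (hB0 x hx) (hB0 y hym)
        _ = 2 * B0 * t := by ring
    have h2 : |deriv (deriv v) η * (x - ξ)| ≤ B2 * t := by
      rw [abs_mul]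
      apply mul_le_mul (hB2 η hηm) _ (abs_nonneg _)
        ((abs_nonneg _).trans (hB2 η hηm))
      rw [abs_of_pos (by linarith [hξ.2] : (0:ℝ) < x - ξ)]
      have := hξ.1; simp only [hy] at this; linarith
    calc |deriv v x| ≤ |deriv v ξ| + |deriv (deriv v) η * (x - ξ)| := by
          rw [hkey]; exact abs_add_le _ _
      _ ≤ 2 * B0 / t + B2 * t := add_le_add h1 h2

end landau

lemma landau1d {v : ℝ → ℝ} {c d B0 B2 : ℝ} (hcd : c < d)
    (hv : ContDiff ℝ (⊤:ℕ∞) v)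
    (hB0 : ∀ x ∈ Icc c d, |v x| ≤ B0)
    (hB2 : ∀ x ∈ Icc c d, |deriv (deriv v) x| ≤ B2)
    (hB2n : 0 ≤ B2) :
    ∀ x ∈ Icc c d, |deriv v x| ≤
      (4 / (d - c) + (d - c) / 2) * Real.sqrt (B0 * (B0 + B2)) := by
  have hL : 0 < d - c := by linarith
  have hB0n : 0 ≤ B0 := (abs_nonneg _).trans (hB0 c ⟨le_refl c, hcd.le⟩)
  rcases eq_or_lt_of_le hB0n with h0 | h0
  · -- B0 = 0 : v vanishes on Icc, so deriv v = 0 there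
    intro x hx
    have hv0 : ∀ y ∈ Icc c d, v y = 0 := by
      intro y hy
      have := hB0 y hy; rw [← h0] at this
      exact abs_eq_zero.mp (le_antisymm this (abs_nonneg _))
    have hdvx : Differentiable ℝ v := hv.differentiable (by simp)
    have h1 : HasDerivWithinAt v (deriv v x) (Icc c d) x :=
      (hdvx x).hasDerivAt.hasDerivWithinAt
    have h2 : HasDerivWithinAt v 0 (Icc c d) x :=
      (hasDerivWithinAt_const x (Icc c d) (0:ℝ)).congr
        (fun y hy => hv0 y hy) (hv0 x hx)
    have : deriv v x = 0 := (uniqueDiffOn_Icc hcd x hx).eq_deriv _ h1 h2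
    rw [this, abs_zero]
    positivity
  · -- B0 > 0
    have hBB : 0 < B0 + B2 := by linarith
    set s0 := Real.sqrt B0 with hs0
    set s2 := Real.sqrt (B0 + B2) with hs2
    have hs0p : 0 < s0 := Real.sqrt_pos.mpr h0
    have hs2p : 0 < s2 := Real.sqrt_pos.mpr hBB
    have hs0sq : s0 ^ 2 = B0 := Real.sq_sqrt hB0n
    have hs2sq : s2 ^ 2 = B0 + B2 := Real.sq_sqrt hBB.le
    set t := ((d - c) / 2) * (s0 / s2) with htdef
    have ht : 0 < t := by positivity
    have hs02 : s0 ≤ s2 := Real.sqrt_le_sqrt (by linarith)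
    have ht2 : t ≤ (d - c) / 2 := by
      rw [htdef]
      nth_rewrite 2 [show (d - c)/2 = ((d-c)/2) * 1 by ring]
      apply mul_le_mul_of_nonneg_left _ (by linarith)
      rw [div_le_one hs2p]; exact hs02
    have hsqP : Real.sqrt (B0 * (B0 + B2)) = s0 * s2 :=
      Real.sqrt_mul hB0n _
    intro x hx
    have hcore := landau_core hcd hv hB0 hB2 ht ht2 x hx
    have e1 : 2 * B0 / t = (4 / (d - c)) * (s0 * s2) := by
      rw [htdef, ← hs0sq]
      field_simp
      ring
    have e2 : B2 * t ≤ ((d - c) / 2) * (s0 * s2) := by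
      have : B2 * t ≤ (B0 + B2) * t :=
        mul_le_mul_of_nonneg_right (by linarith) ht.le
      refine this.trans (le_of_eq ?_)
      rw [htdef, ← hs2sq]
      field_simp
    rw [hsqP]
    calc |deriv v x| ≤ 2 * B0 / t + B2 * t := hcore
      _ ≤ (4 / (d - c)) * (s0 * s2) + ((d - c) / 2) * (s0 * s2) := by
          rw [e1]; exact add_le_add_right e2 _
      _ = (4 / (d - c) + (d - c) / 2) * (s0 * s2) := by ring

section twoD
variable {φ0 φ1 a b : ℝ}

lemma Qcompact : IsCompact (Icc φ0 φ1 ×ˢ Icc a b) :=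
  isCompact_Icc.prod isCompact_Icc

lemma Qnonempty (hφ : φ0 < φ1) (hab : a < b) : (Icc φ0 φ1 ×ˢ Icc a b).Nonempty :=
  (nonempty_Icc.mpr hφ.le).prod (nonempty_Icc.mpr hab.le)

/-- Landau step in the φ direction. -/
lemma landau_phi (hφ : φ0 < φ1) (hab : a < b) {w : ℝ × ℝ → ℝ}
    (hw : ContDiff ℝ (⊤:ℕ∞) w) :
    supQ (Icc φ0 φ1 ×ˢ Icc a b) (pdφ w) ≤
      (4 / (φ1 - φ0) + (φ1 - φ0) / 2) *
        Real.sqrt (supQ (Icc φ0 φ1 ×ˢ Icc a b) w *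
          (supQ (Icc φ0 φ1 ×ˢ Icc a b) w +
           supQ (Icc φ0 φ1 ×ˢ Icc a b) (pdφ (pdφ w)))) := by
  set Q := Icc φ0 φ1 ×ˢ Icc a b with hQ
  set B0 := supQ Q w with hB0d
  set B2 := supQ Q (pdφ (pdφ w)) with hB2d
  apply supQ_le (Qnonempty hφ hab)
  rintro ⟨x0, y0⟩ hp
  rw [Set.mem_prod] at hp
  set v : ℝ → ℝ := fun s => w (s, y0) with hv
  have hvsm : ContDiff ℝ (⊤:ℕ∞) v := hw.comp (contDiff_id.prodMk contDiff_const)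
  have hd1 : deriv v = fun s => pdφ w (s, y0) := rfl
  have hd2 : deriv (deriv v) = fun s => pdφ (pdφ w) (s, y0) := by rw [hd1]; rfl
  have hb0 : ∀ x ∈ Icc φ0 φ1, |v x| ≤ B0 := fun x hx =>
    le_supQ Qcompact hw.continuous (Set.mem_prod.mpr ⟨hx, hp.2⟩)
  have hb2 : ∀ x ∈ Icc φ0 φ1, |deriv (deriv v) x| ≤ B2 := by
    intro x hx
    rw [hd2]
    exact le_supQ Qcompact ((pdφ_contDiff (pdφ_contDiff hw)).continuous)
      (Set.mem_prod.mpr ⟨hx, hp.2⟩)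
  have := landau1d hφ hvsm hb0 hb2 supQ_nonneg x0 hp.1
  rw [hd1] at this
  exact this

/-- Landau step in the k direction. -/
lemma landau_k (hφ : φ0 < φ1) (hab : a < b) {w : ℝ × ℝ → ℝ}
    (hw : ContDiff ℝ (⊤:ℕ∞) w) :
    supQ (Icc φ0 φ1 ×ˢ Icc a b) (pdk w) ≤
      (4 / (b - a) + (b - a) / 2) *
        Real.sqrt (supQ (Icc φ0 φ1 ×ˢ Icc a b) w *
          (supQ (Icc φ0 φ1 ×ˢ Icc a b) w +
           supQ (Icc φ0 φ1 ×ˢ Icc a b) (pdk (pdk w)))) := by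
  set Q := Icc φ0 φ1 ×ˢ Icc a b with hQ
  set B0 := supQ Q w with hB0d
  set B2 := supQ Q (pdk (pdk w)) with hB2d
  apply supQ_le (Qnonempty hφ hab)
  rintro ⟨x0, y0⟩ hp
  rw [Set.mem_prod] at hp
  set v : ℝ → ℝ := fun s => w (x0, s) with hv
  have hvsm : ContDiff ℝ (⊤:ℕ∞) v := hw.comp (contDiff_const.prodMk contDiff_id)
  have hd1 : deriv v = fun s => pdk w (x0, s) := rfl
  have hd2 : deriv (deriv v) = fun s => pdk (pdk w) (x0, s) := by rw [hd1]; rfl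
  have hb0 : ∀ y ∈ Icc a b, |v y| ≤ B0 := fun y hy =>
    le_supQ Qcompact hw.continuous (Set.mem_prod.mpr ⟨hp.1, hy⟩)
  have hb2 : ∀ y ∈ Icc a b, |deriv (deriv v) y| ≤ B2 := by
    intro y hy
    rw [hd2]
    exact le_supQ Qcompact ((pdk_contDiff (pdk_contDiff hw)).continuous)
      (Set.mem_prod.mpr ⟨hp.1, hy⟩)
  have := landau1d hab hvsm hb0 hb2 supQ_nonneg y0 hp.2
  rw [hd1] at this
  exact this

end twoD

section convexstep
variable {φ0 φ1 a b : ℝ}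

lemma term_bound (hφ : φ0 < φ1) (hab : a < b) {u : ℝ × ℝ → ℝ}
    (hu : ContDiff ℝ (⊤:ℕ∞) u) {i j k : ℕ} (hij : i + j = k + 1) :
    supQ (Icc φ0 φ1 ×ˢ Icc a b) (pdφ^[i] (pdk^[j] u)) ≤
      (max (4 / (φ1 - φ0) + (φ1 - φ0) / 2) (4 / (b - a) + (b - a) / 2)) *
        Real.sqrt (gnorm (Icc φ0 φ1 ×ˢ Icc a b) k u *
          (gnorm (Icc φ0 φ1 ×ˢ Icc a b) k u +
           gnorm (Icc φ0 φ1 ×ˢ Icc a b) (k + 2) u)) := by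
  set Q := Icc φ0 φ1 ×ˢ Icc a b with hQdef
  set cφ := 4 / (φ1 - φ0) + (φ1 - φ0) / 2 with hcφ
  set ck := 4 / (b - a) + (b - a) / 2 with hck
  have hcφpos : 0 < cφ := by rw [hcφ]; have : 0 < φ1 - φ0 := by linarith
                             positivity
  have hckpos : 0 < ck := by rw [hck]; have : 0 < b - a := by linarith
                             positivity
  set A := gnorm Q k u with hA
  set B := gnorm Q (k + 2) u with hB
  have hAn : 0 ≤ A := gnorm_nonneg _ _ _
  have hBn : 0 ≤ B := gnorm_nonneg _ _ _
  have sqrt_mono : ∀ x y : ℝ, 0 ≤ x → 0 ≤ y → x ≤ A → y ≤ B →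
      Real.sqrt (x * (x + y)) ≤ Real.sqrt (A * (A + B)) := by
    intro x y hx hy hxA hyB
    apply Real.sqrt_le_sqrt
    apply mul_le_mul hxA (by linarith) (by linarith) hAn
  rcases Nat.eq_zero_or_pos i with hi | hi
  · -- i = 0, j = k+1 : use the k direction
    subst hi
    have hj : j = k + 1 := by omega
    subst hj
    set w := pdk^[k] u with hw
    have hwsm : ContDiff ℝ (⊤:ℕ∞) w := by
      have := iter_contDiff hu 0 k; simpa using this
    have hrw1 : pdφ^[0] (pdk^[k+1] u) = pdk w := by
      simp [hw, Function.iterate_succ_apply']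
    have hrw2 : pdk (pdk w) = pdφ^[0] (pdk^[k+2] u) := by
      simp [hw, ← Function.iterate_succ_apply' pdk]
    rw [hrw1]
    refine (landau_k hφ hab hwsm).trans ?_
    have h1 : supQ Q w ≤ A := by
      have := term_le_gnorm Q u 0 k; simpa [hw] using this
    have h2 : supQ Q (pdk (pdk w)) ≤ B := by
      rw [hrw2]
      have := term_le_gnorm Q u 0 (k+2); simpa using this
    refine mul_le_mul (le_max_right _ _)
      (sqrt_mono _ _ supQ_nonneg supQ_nonneg h1 h2) (Real.sqrt_nonneg _)
      (le_trans hckpos.le (le_max_right _ _))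
  · -- i ≥ 1 : use the φ direction
    obtain ⟨i', rfl⟩ : ∃ i', i = i' + 1 := ⟨i - 1, by omega⟩
    have hij' : i' + j = k := by omega
    set w := pdφ^[i'] (pdk^[j] u) with hw
    have hwsm : ContDiff ℝ (⊤:ℕ∞) w := iter_contDiff hu i' j
    have hrw1 : pdφ^[i'+1] (pdk^[j] u) = pdφ w := by
      rw [Function.iterate_succ_apply']
    have hrw2 : pdφ (pdφ w) = pdφ^[i'+2] (pdk^[j] u) := by
      rw [hw, ← Function.iterate_succ_apply' pdφ i', ← Function.iterate_succ_apply' pdφ (i'+1)]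
    rw [hrw1]
    refine (landau_phi hφ hab hwsm).trans ?_
    have h1 : supQ Q w ≤ A := by
      have := term_le_gnorm Q u i' j; rw [hij'] at this; exact this
    have h2 : supQ Q (pdφ (pdφ w)) ≤ B := by
      rw [hrw2]
      have := term_le_gnorm Q u (i'+2) j
      have e : i' + 2 + j = k + 2 := by omega
      rw [e] at this; exact this
    refine mul_le_mul (le_max_left _ _)
      (sqrt_mono _ _ supQ_nonneg supQ_nonneg h1 h2) (Real.sqrt_nonneg _)
      (le_trans hcφpos.le (le_max_left _ _))

lemma gnorm_convex (hφ : φ0 < φ1) (hab : a < b) {u : ℝ × ℝ → ℝ}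
    (hu : ContDiff ℝ (⊤:ℕ∞) u) (k : ℕ) :
    gnorm (Icc φ0 φ1 ×ˢ Icc a b) (k+1) u ^ 2 ≤
      (2 + 4 * ((k:ℝ) + 2)^2 *
        (max (4 / (φ1 - φ0) + (φ1 - φ0) / 2) (4 / (b - a) + (b - a) / 2))^2) *
      (gnorm (Icc φ0 φ1 ×ˢ Icc a b) k u * gnorm (Icc φ0 φ1 ×ˢ Icc a b) (k+2) u) := by
  set Q := Icc φ0 φ1 ×ˢ Icc a b with hQdef
  set Cq := max (4 / (φ1 - φ0) + (φ1 - φ0) / 2) (4 / (b - a) + (b - a) / 2) with hCq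
  have hCqpos : 0 < Cq := by
    apply lt_max_of_lt_left
    have : 0 < φ1 - φ0 := by linarith
    positivity
  set A := gnorm Q k u with hA
  set B := gnorm Q (k + 2) u with hB
  have hAn : 0 ≤ A := gnorm_nonneg _ _ _
  have hBn : 0 ≤ B := gnorm_nonneg _ _ _
  have hAB : A ≤ B := gnorm_mono Q u (by omega)
  set r := ∑ i ∈ Finset.range (k + 2), supQ Q (pdφ^[i] (pdk^[k + 1 - i] u)) with hr
  have hsplit : gnorm Q (k+1) u = A + r := gnorm_succ Q u k
  set P := Real.sqrt (A * (A + B)) with hP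
  have hPn : 0 ≤ P := Real.sqrt_nonneg _
  have hrb : r ≤ ((k:ℝ) + 2) * (Cq * P) := by
    rw [hr]
    calc ∑ i ∈ Finset.range (k + 2), supQ Q (pdφ^[i] (pdk^[k + 1 - i] u))
        ≤ ∑ _i ∈ Finset.range (k + 2), Cq * P := by
          apply Finset.sum_le_sum
          intro i hi
          have hi' : i ≤ k + 1 := by simp at hi; omega
          exact term_bound hφ hab hu (by omega)
      _ = ((k:ℝ) + 2) * (Cq * P) := by
          rw [Finset.sum_const, Finset.card_range, nsmul_eq_mul]
          push_cast; ring
  have hrn : 0 ≤ r := Finset.sum_nonneg fun _ _ => supQ_nonneg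
  have hP2 : P ^ 2 = A * (A + B) := Real.sq_sqrt (by nlinarith)
  have hA2 : A ^ 2 ≤ A * B := by nlinarith
  have hr2 : r ^ 2 ≤ ((k:ℝ) + 2)^2 * Cq^2 * (2 * (A * B)) := by
    have h1 : r ^ 2 ≤ (((k:ℝ) + 2) * (Cq * P))^2 := by
      apply pow_le_pow_left₀ hrn hrb
    have h2 : (((k:ℝ) + 2) * (Cq * P))^2 = ((k:ℝ)+2)^2 * Cq^2 * P^2 := by ring
    rw [h2, hP2] at h1
    have h3 : A * (A + B) ≤ 2 * (A * B) := by nlinarith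
    refine h1.trans ?_
    apply mul_le_mul_of_nonneg_left h3 (by positivity)
  rw [hsplit]
  have hexp : (A + r)^2 ≤ 2 * A^2 + 2 * r^2 := by nlinarith [sq_nonneg (A - r)]
  calc (A + r)^2 ≤ 2 * A^2 + 2 * r^2 := hexp
    _ ≤ 2 * (A * B) + 2 * (((k:ℝ) + 2)^2 * Cq^2 * (2 * (A * B))) := by
        apply add_le_add
        · linarith
        · linarith
    _ = (2 + 4 * ((k:ℝ) + 2)^2 * Cq^2) * (A * B) := by ring

end convexstep

lemma dconvex {h : ℕ → ℝ} {N : ℕ}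
    (hc : ∀ k, k + 2 ≤ N → 2 * h (k+1) ≤ h k + h (k+2)) :
    ∀ n ≤ N, (N : ℝ) * h n ≤ ((N : ℝ) - n) * h 0 + n * h N := by
  set d : ℕ → ℝ := fun k => h (k+1) - h k with hd
  have hstep : ∀ k, k + 2 ≤ N → d k ≤ d (k+1) := by
    intro k hk
    have := hc k hk
    simp only [hd]
    linarith
  have hmono : ∀ l, l + 1 ≤ N → ∀ k ≤ l, d k ≤ d l := by
    intro l
    induction l with
    | zero => intro _ k hk; interval_cases k; exact le_refl _
    | succ l ih =>
      intro hlN k hk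
      rcases Nat.eq_or_lt_of_le hk with rfl | hlt
      · exact le_refl _
      · have h1 : d k ≤ d l := ih (by omega) k (by omega)
        exact h1.trans (hstep l (by omega))
  intro n hn
  have hsum1 : h n - h 0 = ∑ k ∈ Finset.range n, d k := (Finset.sum_range_sub h n).symm
  have hsum2 : h N - h n = ∑ k ∈ Finset.Ico n N, d k := by
    rw [Finset.sum_Ico_eq_sub _ hn, Finset.sum_range_sub h, Finset.sum_range_sub h]
    ring
  -- key: (N-n) * (h n - h 0) ≤ n * (h N - h n)
  have hkey : ((N : ℝ) - n) * (h n - h 0) ≤ (n : ℝ) * (h N - h n) := by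
    rw [hsum1, hsum2]
    have hcard : ((N : ℝ) - n) = ((Finset.Ico n N).card : ℝ) := by
      rw [Nat.card_Ico]
      have : ((N - n : ℕ) : ℝ) = (N : ℝ) - n := by
        have := Nat.cast_sub hn (R := ℝ); linarith [this]
      linarith [this]
    rw [hcard]
    have lhs_eq : ((Finset.Ico n N).card : ℝ) * (∑ k ∈ Finset.range n, d k)
        = ∑ _j ∈ Finset.Ico n N, ∑ k ∈ Finset.range n, d k := by
      rw [Finset.sum_const, nsmul_eq_mul]
    have rhs_eq : (n : ℝ) * (∑ j ∈ Finset.Ico n N, d j)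
        = ∑ j ∈ Finset.Ico n N, ∑ _k ∈ Finset.range n, d j := by
      rw [Finset.mul_sum]
      apply Finset.sum_congr rfl
      intro j _
      rw [Finset.sum_const, Finset.card_range, nsmul_eq_mul]
    rw [lhs_eq, rhs_eq]
    apply Finset.sum_le_sum
    intro j hj
    apply Finset.sum_le_sum
    intro k hk
    simp only [Finset.mem_Ico] at hj
    simp only [Finset.mem_range] at hk
    exact hmono j (by omega) k (by omega)
  nlinarith [hkey]

lemma seq_interp {A : ℕ → ℝ} {K : ℝ} {N n m : ℕ} (hN : n + m = N)
    (hApos : ∀ k, 0 < A k) (hK : 1 ≤ K)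
    (hconv : ∀ k, k + 2 ≤ N → A (k+1)^2 ≤ K * (A k * A (k+2))) :
    (A n)^(2*N) ≤ (A 0)^(2*m) * (A N)^(2*n) * K^(N*n*m) := by
  have hKpos : (0:ℝ) < K := lt_of_lt_of_le one_pos hK
  have hlogK : 0 ≤ Real.log K := Real.log_nonneg hK
  set h : ℕ → ℝ := fun k => Real.log (A k) with hh
  have hconv' : ∀ k, k + 2 ≤ N → 2 * h (k+1) ≤ h k + h (k+2) + Real.log K := by
    intro k hk
    have h1 := hconv k hk
    have h2 : Real.log (A (k+1) ^ 2) ≤ Real.log (K * (A k * A (k+2))) :=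
      Real.log_le_log (pow_pos (hApos (k+1)) 2) h1
    rw [Real.log_pow, Real.log_mul (ne_of_gt hKpos) (ne_of_gt (mul_pos (hApos k) (hApos (k+2)))),
      Real.log_mul (ne_of_gt (hApos k)) (ne_of_gt (hApos (k+2)))] at h2
    simp only [hh]
    push_cast at h2
    linarith
  set H : ℕ → ℝ := fun k => h k - Real.log K * ((k:ℝ) * ((N:ℝ) - (k:ℝ))) / 2 with hH
  have hHconv : ∀ k, k + 2 ≤ N → 2 * H (k+1) ≤ H k + H (k+2) := by
    intro k hk
    have h1 := hconv' k hk
    have key : 2 * (Real.log K * (((k:ℝ)+1) * ((N:ℝ) - ((k:ℝ)+1))) / 2)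
        = Real.log K * ((k:ℝ) * ((N:ℝ) - (k:ℝ))) / 2
          + Real.log K * (((k:ℝ)+2) * ((N:ℝ) - ((k:ℝ)+2))) / 2 + Real.log K := by
      ring
    simp only [hH]
    push_cast
    push_cast at key
    linarith
  have hd := dconvex hHconv n (by omega)
  have hH0 : H 0 = h 0 := by simp [hH]
  have hHN : H N = h N := by simp [hH]
  have hHn : H n = h n - Real.log K * ((n:ℝ) * ((N:ℝ) - (n:ℝ))) / 2 := rfl
  rw [hH0, hHN, hHn] at hd
  have hmn : ((N:ℝ) - (n:ℝ)) = (m:ℝ) := by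
    have : (n:ℝ) + (m:ℝ) = (N:ℝ) := by exact_mod_cast congrArg (Nat.cast : ℕ → ℝ) hN
    linarith
  have hmain : ((2*N : ℕ):ℝ) * h n ≤
      ((2*m : ℕ):ℝ) * h 0 + ((2*n : ℕ):ℝ) * h N + ((N*n*m : ℕ):ℝ) * Real.log K := by
    push_cast
    rw [hmn] at hd
    nlinarith [hd, hlogK]
  have hexp := Real.exp_le_exp.mpr hmain
  rw [Real.exp_add, Real.exp_add, Real.exp_nat_mul, Real.exp_nat_mul,
    Real.exp_nat_mul, Real.exp_nat_mul] at hexp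
  simp only [hh] at hexp
  rw [Real.exp_log (hApos n), Real.exp_log (hApos 0), Real.exp_log (hApos N),
    Real.exp_log hKpos] at hexp
  exact hexp

/-- Interpolation inequality for graded seminorms (Hamilton, Corollary 2.2.2):
`‖f‖_n ‖g‖_m ≤ C (‖f‖_{n+m} ‖g‖₀ + ‖f‖₀ ‖g‖_{n+m})`. -/
theorem interpolation_inequality
    (φ0 φ1 a b : ℝ) (n m : ℕ) (hφ : φ0 < φ1) (hab : a < b) :
    ∃ C > (0 : ℝ), ∀ f g : ℝ × ℝ → ℝ, ContDiff ℝ (⊤ : ℕ∞) f → ContDiff ℝ (⊤ : ℕ∞) g →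
      gnorm (Icc φ0 φ1 ×ˢ Icc a b) n f * gnorm (Icc φ0 φ1 ×ˢ Icc a b) m g ≤
        C * (gnorm (Icc φ0 φ1 ×ˢ Icc a b) (n + m) f *
               gnorm (Icc φ0 φ1 ×ˢ Icc a b) 0 g +
             gnorm (Icc φ0 φ1 ×ˢ Icc a b) 0 f *
               gnorm (Icc φ0 φ1 ×ˢ Icc a b) (n + m) g) := by
  set Q := Icc φ0 φ1 ×ˢ Icc a b with hQdef
  set N := n + m with hNdef
  set Cq := max (4 / (φ1 - φ0) + (φ1 - φ0) / 2) (4 / (b - a) + (b - a) / 2) with hCq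
  set K := 2 + 4 * ((N:ℝ) + 1)^2 * Cq^2 with hKdef
  have hK1 : (1:ℝ) ≤ K := by
    rw [hKdef]; nlinarith [sq_nonneg (((N:ℝ)+1) * Cq)]
  have hKpos : (0:ℝ) < K := lt_of_lt_of_le one_pos hK1
  refine ⟨K^(n*m), pow_pos hKpos _, ?_⟩
  intro f g hf' hg'
  have hf : ContDiff ℝ (⊤:ℕ∞) f := hf'.of_le (by simp)
  have hg : ContDiff ℝ (⊤:ℕ∞) g := hg'.of_le (by simp)
  set af : ℕ → ℝ := fun k => gnorm Q k f with haf
  set bg : ℕ → ℝ := fun k => gnorm Q k g with hbg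
  have hafn : ∀ k, 0 ≤ af k := fun k => gnorm_nonneg _ _ _
  have hbgn : ∀ k, 0 ≤ bg k := fun k => gnorm_nonneg _ _ _
  show af n * bg m ≤ K^(n*m) * (af N * bg 0 + af 0 * bg N)
  rcases Nat.eq_zero_or_pos N with hN0 | hNpos
  · -- N = 0 : n = m = 0
    have hn0 : n = 0 := by omega
    have hm0 : m = 0 := by omega
    simp only [hN0, hn0, hm0, Nat.mul_zero, Nat.zero_mul, pow_zero, one_mul]
    have h0 : 0 ≤ af 0 * bg 0 := mul_nonneg (hafn 0) (hbgn 0)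
    linarith
  -- N ≥ 1
  have hconv : ∀ (u : ℝ × ℝ → ℝ), ContDiff ℝ (⊤:ℕ∞) u → ∀ k, k + 2 ≤ N →
      gnorm Q (k+1) u ^ 2 ≤ K * (gnorm Q k u * gnorm Q (k+2) u) := by
    intro u hu k hk
    have hcc := gnorm_convex hφ hab hu k
    rw [← hCq] at hcc
    refine hcc.trans ?_
    apply mul_le_mul_of_nonneg_right _
      (mul_nonneg (gnorm_nonneg _ _ _) (gnorm_nonneg _ _ _))
    have h1 : ((k:ℝ) + 2) ≤ (N:ℝ) + 1 := by
      have : ((k:ℕ):ℝ) + 2 ≤ ((N:ℕ):ℝ) := by exact_mod_cast hk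
      linarith
    have h2 : ((k:ℝ) + 2)^2 ≤ ((N:ℝ) + 1)^2 := by
      apply pow_le_pow_left₀ (by positivity) h1
    have hKeq : K = 2 + 4 * ((N:ℝ) + 1)^2 * Cq^2 := hKdef
    nlinarith [sq_nonneg Cq, h2]
  -- ε-perturbed inequality
  have hstep : ∀ ε : ℝ, 0 < ε →
      (af n + ε) * (bg m + ε) ≤
        K^(n*m) * ((af N + ε) * (bg 0 + ε) + (af 0 + ε) * (bg N + ε)) := by
    intro ε hε
    have pert : ∀ (c : ℕ → ℝ), (∀ k, 0 ≤ c k) →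
        (∀ k, k + 2 ≤ N → c (k+1) ^ 2 ≤ K * (c k * c (k+2))) →
        ∀ k, k + 2 ≤ N → (c (k+1) + ε) ^ 2 ≤ K * ((c k + ε) * (c (k+2) + ε)) := by
      intro c hcn hcc k hk
      have h1 := hcc k hk
      have hxy : 4 * (c k * c (k+2)) ≤ (c k + c (k+2))^2 := by
        nlinarith [sq_nonneg (c k - c (k+2))]
      have h2 : 2 * c (k+1) ≤ K * (c k + c (k+2)) := by
        have hsq : (2 * c (k+1))^2 ≤ (K * (c k + c (k+2)))^2 := by
          calc (2 * c (k+1))^2 = 4 * (c (k+1)^2) := by ring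
            _ ≤ 4 * (K * (c k * c (k+2))) := by linarith
            _ = K * (4 * (c k * c (k+2))) := by ring
            _ ≤ K * ((c k + c (k+2))^2) :=
                mul_le_mul_of_nonneg_left hxy (by linarith)
            _ ≤ K^2 * ((c k + c (k+2))^2) := by
                apply mul_le_mul_of_nonneg_right _ (sq_nonneg _)
                nlinarith [mul_le_mul_of_nonneg_left hK1 hKpos.le]
            _ = (K * (c k + c (k+2)))^2 := by ring
        exact le_of_pow_le_pow_left₀ two_ne_zero
          (mul_nonneg (by linarith)
            (by linarith [hcn k, hcn (k+2)])) hsq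
      have t2 : 2 * c (k+1) * ε ≤ K * (c k + c (k+2)) * ε :=
        mul_le_mul_of_nonneg_right h2 hε.le
      have t3 : ε^2 ≤ K * ε^2 := by nlinarith [sq_nonneg ε]
      nlinarith [h1, t2, t3]
    have hApos : ∀ k, 0 < af k + ε := fun k => by have := hafn k; linarith
    have hBpos : ∀ k, 0 < bg k + ε := fun k => by have := hbgn k; linarith
    have fint : (af n + ε)^(2*N) ≤
        (af 0 + ε)^(2*m) * (af N + ε)^(2*n) * K^(N*n*m) :=
      seq_interp rfl hApos hK1 (pert af hafn (hconv f hf))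
    have gint : (bg m + ε)^(2*N) ≤
        (bg 0 + ε)^(2*n) * (bg N + ε)^(2*m) * K^(N*m*n) :=
      seq_interp (by omega) hBpos hK1 (pert bg hbgn (hconv g hg))
    have hexpeq : N*m*n = N*n*m := by ring
    rw [hexpeq] at gint
    set X := (af N + ε) * (bg 0 + ε) with hX
    set Y := (af 0 + ε) * (bg N + ε) with hY
    have hXpos : 0 < X := mul_pos (hApos N) (hBpos 0)
    have hYpos : 0 < Y := mul_pos (hApos 0) (hBpos N)
    have hprod : ((af n + ε) * (bg m + ε))^(2*N) ≤
        X^(2*n) * Y^(2*m) * (K^(n*m))^(2*N) := by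
      calc ((af n + ε) * (bg m + ε))^(2*N)
          = (af n + ε)^(2*N) * (bg m + ε)^(2*N) := mul_pow _ _ _
        _ ≤ ((af 0 + ε)^(2*m) * (af N + ε)^(2*n) * K^(N*n*m)) *
            ((bg 0 + ε)^(2*n) * (bg N + ε)^(2*m) * K^(N*n*m)) := by
            apply mul_le_mul fint gint (pow_nonneg (hBpos m).le _)
              (mul_nonneg (mul_nonneg (pow_nonneg (hApos 0).le _)
                (pow_nonneg (hApos N).le _)) (pow_nonneg hKpos.le _))
        _ = X^(2*n) * Y^(2*m) * (K^(n*m))^(2*N) := by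
            rw [hX, hY, mul_pow, mul_pow, ← pow_mul]
            rw [show n*m*(2*N) = N*n*m + N*n*m by ring, pow_add]
            ring
    have hXY : X^(2*n) * Y^(2*m) ≤ (X + Y)^(2*N) := by
      calc X^(2*n) * Y^(2*m) ≤ (X+Y)^(2*n) * (X+Y)^(2*m) := by
            apply mul_le_mul (pow_le_pow_left₀ hXpos.le (by linarith) _)
              (pow_le_pow_left₀ hYpos.le (by linarith) _)
              (by positivity) (by positivity)
        _ = (X + Y)^(2*N) := by rw [← pow_add]; congr 1; omega
    have hfinal : ((af n + ε) * (bg m + ε))^(2*N) ≤ (K^(n*m) * (X + Y))^(2*N) := by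
      calc ((af n + ε) * (bg m + ε))^(2*N) ≤ X^(2*n) * Y^(2*m) * (K^(n*m))^(2*N) := hprod
        _ ≤ (X+Y)^(2*N) * (K^(n*m))^(2*N) := by
            apply mul_le_mul_of_nonneg_right hXY (pow_nonneg (pow_nonneg hKpos.le _) _)
        _ = (K^(n*m) * (X+Y))^(2*N) := by rw [mul_pow]; ring
    have h2N : 2*N ≠ 0 := by omega
    exact le_of_pow_le_pow_left₀ h2N (by positivity) hfinal
  -- take ε → 0⁺
  have h1 : Filter.Tendsto (fun ε : ℝ => (af n + ε) * (bg m + ε))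
      (nhdsWithin 0 (Ioi 0)) (nhds (af n * bg m)) := by
    have hc : Continuous fun ε : ℝ => (af n + ε) * (bg m + ε) :=
      (continuous_const.add continuous_id).mul (continuous_const.add continuous_id)
    have := hc.tendsto 0
    simp only [add_zero] at this
    exact this.mono_left nhdsWithin_le_nhds
  have h2 : Filter.Tendsto
      (fun ε : ℝ => K^(n*m) * ((af N + ε) * (bg 0 + ε) + (af 0 + ε) * (bg N + ε)))
      (nhdsWithin 0 (Ioi 0)) (nhds (K^(n*m) * (af N * bg 0 + af 0 * bg N))) := by
    have hc : Continuous fun ε : ℝ =>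
        K^(n*m) * ((af N + ε) * (bg 0 + ε) + (af 0 + ε) * (bg N + ε)) :=
      continuous_const.mul
        ((((continuous_const.add continuous_id).mul
            (continuous_const.add continuous_id))).add
         (((continuous_const.add continuous_id).mul
            (continuous_const.add continuous_id))))
    have := hc.tendsto 0
    simp only [add_zero] at this
    exact this.mono_left nhdsWithin_le_nhds
  exact le_of_tendsto_of_tendsto h1 h2
    (Filter.eventually_of_mem self_mem_nhdsWithin (fun ε hε => hstep ε hε))
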